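/- arXiv:1001.3332 — 2 statements merged into one kernel-verified Lean document; each statement's English description precedes it below -/
import Mathlib

section
/- Let G be a finite simple graph with n vertices whose minimum vertex cover size opt satisfies n ≤ 2·opt, and let V(G) = V1 ⊎ V2 be a partition of its vertex set. Let ε ≥ 0, let optᵢ denote the minimum vertex cover size of the induced subgraph G[Vᵢ], and let Cᵢ be a vertex cover of G[Vᵢ] with |Cᵢ| ≤ (1 + ε)·optᵢ, for i = 1, 2. Then V1 ∪ C2 and V2 ∪ C1 are both vertex covers of G, and min(|V1 ∪ C2|, |V2 ∪ C1|) ≤ (1.5 + ε/2)·opt. -/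
/-!
A minimum vertex cover of `G` restricts to vertex covers of `G[V1]` and `G[V2]`, so
`opt1 + opt2 ≤ opt`. The two candidate covers have total size at most
`|V1| + |V2| + |C1| + |C2| ≤ n + (1 + ε) · opt ≤ (3 + ε) · opt`, and the smaller one is at most
half of that.
-/

/-- `C` is a vertex cover of the subgraph of `G` induced by `S`: it consists of vertices of
`S` and covers every edge of `G` with both endpoints in `S`. -/
def IsVCOn {V : Type*} (G : SimpleGraph V) (S C : Finset V) : Prop :=
  C ⊆ S ∧ ∀ u v : V, G.Adj u v → u ∈ S → v ∈ S → u ∈ C ∨ v ∈ C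

/-- The minimum cardinality of a vertex cover of the subgraph of `G` induced by `S`. -/
noncomputable def vcOn {V : Type*} (G : SimpleGraph V) (S : Finset V) : ℕ :=
  sInf {n | ∃ C : Finset V, IsVCOn G S C ∧ C.card = n}

namespace IsVCOn

variable {V : Type*} {G : SimpleGraph V}

theorem self (S : Finset V) : IsVCOn G S S :=
  ⟨subset_rfl, fun _ _ _ hu _ => Or.inl hu⟩

theorem vcOn_le_card {S C : Finset V} (h : IsVCOn G S C) : vcOn G S ≤ C.card :=
  Nat.sInf_le ⟨C, h, rfl⟩

theorem inter [DecidableEq V] {S T C : Finset V} (h : IsVCOn G S C) (hTS : T ⊆ S) :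
    IsVCOn G T (C ∩ T) := by
  refine ⟨Finset.inter_subset_right, fun u v huv hu hv => ?_⟩
  rcases h.2 u v huv (hTS hu) (hTS hv) with hu' | hv'
  · exact Or.inl (Finset.mem_inter.2 ⟨hu', hu⟩)
  · exact Or.inr (Finset.mem_inter.2 ⟨hv', hv⟩)

theorem adj_mem_union [DecidableEq V] {S T C : Finset V} (hST : ∀ x, x ∈ S ∨ x ∈ T)
    (hC : IsVCOn G T C) : ∀ u v, G.Adj u v → u ∈ S ∪ C ∨ v ∈ S ∪ C := by
  intro u v huv
  rcases hST u with hu | hu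
  · exact Or.inl (Finset.mem_union_left _ hu)
  rcases hST v with hv | hv
  · exact Or.inr (Finset.mem_union_left _ hv)
  rcases hC.2 u v huv hu hv with hu' | hv'
  · exact Or.inl (Finset.mem_union_right _ hu')
  · exact Or.inr (Finset.mem_union_right _ hv')

end IsVCOn

theorem exists_isVCOn_card_eq_vcOn {V : Type*} (G : SimpleGraph V) (S : Finset V) :
    ∃ C, IsVCOn G S C ∧ C.card = vcOn G S :=
  Nat.sInf_mem (s := {n | ∃ C, IsVCOn G S C ∧ C.card = n})
    ⟨S.card, S, IsVCOn.self S, rfl⟩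

theorem vcOn_add_vcOn_le_vcOn_union {V : Type*} [DecidableEq V] (G : SimpleGraph V)
    {S T : Finset V} (hST : Disjoint S T) : vcOn G S + vcOn G T ≤ vcOn G (S ∪ T) := by
  obtain ⟨C, hC, hCcard⟩ := exists_isVCOn_card_eq_vcOn G (S ∪ T)
  have hsplit : C ∩ S ∪ C ∩ T = C := by
    rw [← Finset.inter_union_distrib_left, Finset.inter_eq_left.2 hC.1]
  calc vcOn G S + vcOn G T
      ≤ (C ∩ S).card + (C ∩ T).card :=
        add_le_add (hC.inter Finset.subset_union_left).vcOn_le_card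
          (hC.inter Finset.subset_union_right).vcOn_le_card
    _ = C.card := by
        rw [← Finset.card_union_of_disjoint
          (hST.mono Finset.inter_subset_right Finset.inter_subset_right), hsplit]
    _ = vcOn G (S ∪ T) := hCcard

/-- **Core of the (1.5 + ε)-approximation analysis.** If `n ≤ 2·opt`, the vertex set is
partitioned as `V1 ⊎ V2`, and `C i` is a `(1 + ε)`-approximate vertex cover of `G[V i]`,
then `V1 ∪ C2` and `V2 ∪ C1` are vertex covers of `G` and the smaller of the two has size
at most `(1.5 + ε/2) · opt`. -/
theorem general_rectangles_core {V : Type*} [Fintype V] [DecidableEq V] (G : SimpleGraph V)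
    (hn : Fintype.card V ≤ 2 * vcOn G Finset.univ)
    (V1 V2 : Finset V) (hdisj : Disjoint V1 V2) (hunion : V1 ∪ V2 = Finset.univ)
    (ε : ℝ) (hε : 0 ≤ ε) (C1 C2 : Finset V)
    (hC1 : IsVCOn G V1 C1) (hC2 : IsVCOn G V2 C2)
    (hC1card : (C1.card : ℝ) ≤ (1 + ε) * vcOn G V1)
    (hC2card : (C2.card : ℝ) ≤ (1 + ε) * vcOn G V2) :
    (∀ u v : V, G.Adj u v → u ∈ V1 ∪ C2 ∨ v ∈ V1 ∪ C2) ∧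
    (∀ u v : V, G.Adj u v → u ∈ V2 ∪ C1 ∨ v ∈ V2 ∪ C1) ∧
    min ((V1 ∪ C2).card : ℝ) ((V2 ∪ C1).card : ℝ)
      ≤ (1.5 + ε / 2) * vcOn G Finset.univ := by
  have hmem : ∀ x, x ∈ V1 ∨ x ∈ V2 := fun x =>
    Finset.mem_union.1 (hunion ▸ Finset.mem_univ x)
  refine ⟨hC2.adj_mem_union hmem, hC1.adj_mem_union (fun x => (hmem x).symm), ?_⟩
  have hopt : ((vcOn G V1 + vcOn G V2 : ℕ) : ℝ) ≤ vcOn G Finset.univ := by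
    exact_mod_cast hunion ▸ vcOn_add_vcOn_le_vcOn_union G hdisj
  have hV : ((V1.card + V2.card : ℕ) : ℝ) ≤ 2 * vcOn G Finset.univ := by
    rw [← Finset.card_union_of_disjoint hdisj, hunion, Finset.card_univ]
    exact_mod_cast hn
  have h1 : ((V1 ∪ C2).card : ℝ) ≤ V1.card + C2.card := by
    exact_mod_cast Finset.card_union_le V1 C2
  have h2 : ((V2 ∪ C1).card : ℝ) ≤ V2.card + C1.card := by
    exact_mod_cast Finset.card_union_le V2 C1
  push_cast at hopt hV
  have hC : (C1.card : ℝ) + C2.card ≤ (1 + ε) * vcOn G Finset.univ := by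
    have := mul_le_mul_of_nonneg_left hopt (by linarith : (0 : ℝ) ≤ 1 + ε)
    linarith
  linarith [min_le_left ((V1 ∪ C2).card : ℝ) ((V2 ∪ C1).card : ℝ),
    min_le_right ((V1 ∪ C2).card : ℝ) ((V2 ∪ C1).card : ℝ)]
end

section
/- Let q ≥ 1 be an integer and let F be a finite set of n axis-parallel rectangles in general position such that no two rectangles of F cross and no q + 1 rectangles of F pairwise intersect. Then the set of joints of F, i.e. the set of points p ∈ ℝ² that lie on the topological boundaries of at least two distinct rectangles of F, has cardinality at most 8(q − 1)·n. -/
/-- An axis-parallel rectangle `[a,b] × [c,d]` with `a < b` and `c < d`. -/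
structure AxisRect where
  a : ℝ
  b : ℝ
  c : ℝ
  d : ℝ
  hab : a < b
  hcd : c < d

/-- The x-projection of an axis-parallel rectangle. -/
def AxisRect.X (R : AxisRect) : Set ℝ := Set.Icc R.a R.b

/-- The y-projection of an axis-parallel rectangle. -/
def AxisRect.Y (R : AxisRect) : Set ℝ := Set.Icc R.c R.d

/-- The rectangle as a subset of the plane `ℝ × ℝ`. -/
def AxisRect.toSet (R : AxisRect) : Set (ℝ × ℝ) := R.X ×ˢ R.Y

/-- The four corners of an axis-parallel rectangle. -/
def AxisRect.corners (R : AxisRect) : Set (ℝ × ℝ) :=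
  ({R.a, R.b} : Set ℝ) ×ˢ ({R.c, R.d} : Set ℝ)

/-- Two rectangles cross: one x-projection is strictly contained in the other while the
y-projections are strictly contained the other way around. -/
def AxisRect.Cross (R S : AxisRect) : Prop :=
  (R.X ⊂ S.X ∧ S.Y ⊂ R.Y) ∨ (S.X ⊂ R.X ∧ R.Y ⊂ S.Y)

/-- Two rectangles are in general position: all endpoints of the x-projections are distinct,
and all endpoints of the y-projections are distinct. -/
def GenPosPair (R S : AxisRect) : Prop :=
  R.a ≠ S.a ∧ R.a ≠ S.b ∧ R.b ≠ S.a ∧ R.b ≠ S.b ∧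
  R.c ≠ S.c ∧ R.c ≠ S.d ∧ R.d ≠ S.c ∧ R.d ≠ S.d

/-! By general position, a joint is where a vertical side of one rectangle `A` meets a
horizontal side of another rectangle `B`. Since `A` and `B` do not cross, a corner of one of
them lies in the other, and the joint is charged to that corner, that containing rectangle and
a bit recording which rectangle owns the vertical side. A charge determines its joint, and by the
clique bound a corner of a rectangle lies in at most `q - 1` other rectangles, so there are at
most `2 · 4n · (q - 1)` charges. -/

open Finset

theorem Set.ncard_le_card_of_forall_subsingleton {α β : Type*} {s : Set α} {t : Finset β}
    (r : α → β → Prop) (hs : ∀ a ∈ s, ∃ b ∈ t, r a b)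
    (ht : ∀ b ∈ t, {a ∈ s | r a b}.Subsingleton) : s.ncard ≤ #t := by
  classical
  rcases s.finite_or_infinite with hfin | hinf
  · rw [Set.ncard_eq_toFinset_card s hfin]
    exact card_le_card_of_forall_subsingleton r (by simpa using hs) (by simpa using ht)
  · simp [hinf.ncard]

theorem Finset.card_filter_prod_le_mul {α β : Type*} [Fintype α] [Fintype β]
    (P : α × β → Prop) [DecidablePred P] {k : ℕ} (h : ∀ a, #{b | P (a, b)} ≤ k) :
    #{x | P x} ≤ Fintype.card α * k := by
  rw [card_filter, Fintype.sum_prod_type]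
  calc ∑ a, ∑ b, (if P (a, b) then 1 else 0)
      ≤ ∑ _a : α, k := sum_le_sum fun a _ => (card_filter _ _).symm.trans_le (h a)
    _ = Fintype.card α * k := by simp

section Clique

variable {ι α : Type*} [Fintype ι] (U : ι → Set α) {q : ℕ}
  (hclique : ∀ S : Finset ι, (∀ i ∈ S, ∀ j ∈ S, (U i ∩ U j).Nonempty) → #S ≤ q)
include hclique

open scoped Classical in
theorem card_filter_mem_le_of_clique (v : α) : #{i | v ∈ U i} ≤ q := by
  refine hclique _ fun i hi j hj => ⟨v, ?_, ?_⟩ <;> simp_all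

open scoped Classical in
theorem card_filter_ne_mem_le_of_clique {s : ι} {v : α} (hv : v ∈ U s) :
    #{i | i ≠ s ∧ v ∈ U i} ≤ q - 1 := by
  have hlt : #{i | i ≠ s ∧ v ∈ U i} < #{i | v ∈ U i} :=
    card_lt_card <| (ssubset_iff_of_subset fun i => by simp +contextual).2
      ⟨s, by simpa using hv, by simp⟩
  have := card_filter_mem_le_of_clique U hclique v
  omega

end Clique

theorem Set.Icc_ssubset_Icc_of_mem {α : Type*} [LinearOrder α] {a b c d x : α}
    (hx : x ∈ Set.Icc a b) (hx' : x ∈ Set.Icc c d) (hc : c ∉ Set.Icc a b)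
    (hd : d ∉ Set.Icc a b) : Set.Icc a b ⊂ Set.Icc c d := by
  simp only [Set.mem_Icc, not_and_or, not_le] at hx hx' hc hd
  have hca : c < a := hc.resolve_right (not_lt.2 (hx'.1.trans hx.2))
  have hbd : b < d := hd.resolve_left (not_lt.2 (hx.1.trans hx'.2))
  exact Set.Icc_ssubset_Icc_left (hca.le.trans (hx.1.trans hx'.2)) hca hbd.le

-- `c` and `d` cannot both lie in `(a, b)`, since `z` would then lie there too.
theorem eq_of_mem_Ioo_of_endpoint {α : Type*} [LinearOrder α] {a b c d y y' z : α}
    (hz : z = a ∨ z = b) (hzcd : z ∈ Set.Icc c d) (hy : y ∈ Set.Ioo a b)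
    (hy' : y' ∈ Set.Ioo a b)
    (hyc : y = c ∨ y = d) (hy'c : y' = c ∨ y' = d) : y = y' := by
  simp only [Set.mem_Icc, Set.mem_Ioo] at hzcd hy hy'
  rcases hz with rfl | rfl <;> rcases hyc with rfl | rfl <;> rcases hy'c with rfl | rfl <;>
    first | rfl | (exfalso; order)

namespace AxisRect

def xEnd (R : AxisRect) (e : Bool) : ℝ := bif e then R.b else R.a

def yEnd (R : AxisRect) (d : Bool) : ℝ := bif d then R.d else R.c

def corner (R : AxisRect) (e d : Bool) : ℝ × ℝ := (R.xEnd e, R.yEnd d)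

variable {A B R : AxisRect} {p p' : ℝ × ℝ} {x y : ℝ}

theorem exists_xEnd_eq_iff : (∃ e, R.xEnd e = x) ↔ x = R.a ∨ x = R.b := by
  simp [xEnd, eq_comm]

theorem exists_yEnd_eq_iff : (∃ d, R.yEnd d = y) ↔ y = R.c ∨ y = R.d := by
  simp [yEnd, eq_comm]

theorem xEnd_mem_X (e : Bool) : R.xEnd e ∈ R.X := by
  cases e <;> simp [xEnd, X, R.hab.le]

theorem yEnd_mem_Y (d : Bool) : R.yEnd d ∈ R.Y := by
  cases d <;> simp [yEnd, Y, R.hcd.le]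

theorem corner_mem_toSet (e d : Bool) : R.corner e d ∈ R.toSet :=
  ⟨xEnd_mem_X e, yEnd_mem_Y d⟩

theorem mem_frontier_toSet :
    p ∈ frontier R.toSet ↔
      (p.1 = R.a ∨ p.1 = R.b) ∧ p.2 ∈ R.Y ∨ p.1 ∈ R.X ∧ (p.2 = R.c ∨ p.2 = R.d) := by
  simp only [toSet, X, Y, frontier_prod_eq, frontier_Icc R.hab.le, frontier_Icc R.hcd.le,
    closure_Icc, Set.mem_union, Set.mem_prod, Set.mem_insert_iff, Set.mem_singleton_iff]
  tauto

/-- `p` is an interior point of a vertical side of `A` and of a horizontal side of `B`. -/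
def IsSideCrossing (A B : AxisRect) (p : ℝ × ℝ) : Prop :=
  (p.1 = A.a ∨ p.1 = A.b) ∧ p.2 ∈ Set.Ioo A.c A.d ∧ (p.2 = B.c ∨ p.2 = B.d) ∧
    p.1 ∈ Set.Ioo B.a B.b

theorem Cross.symm (h : A.Cross B) : B.Cross A :=
  Or.symm h

theorem _root_.GenPosPair.symm (h : GenPosPair A B) : GenPosPair B A := by
  obtain ⟨h1, h2, h3, h4, h5, h6, h7, h8⟩ := h
  exact ⟨h1.symm, h3.symm, h2.symm, h4.symm, h5.symm, h7.symm, h6.symm, h8.symm⟩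

theorem isSideCrossing_of_genPosPair (h : GenPosPair A B)
    (hA : (p.1 = A.a ∨ p.1 = A.b) ∧ p.2 ∈ A.Y)
    (hB : p.1 ∈ B.X ∧ (p.2 = B.c ∨ p.2 = B.d)) :
    IsSideCrossing A B p := by
  obtain ⟨h1, h2, h3, h4, h5, h6, h7, h8⟩ := h
  simp only [IsSideCrossing, X, Y, Set.mem_Icc, Set.mem_Ioo] at *
  grind

theorem isSideCrossing_of_mem_frontier (h : GenPosPair A B) (hA : p ∈ frontier A.toSet)
    (hB : p ∈ frontier B.toSet) : IsSideCrossing A B p ∨ IsSideCrossing B A p := by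
  rw [mem_frontier_toSet] at hA hB
  rcases hA with hA | hA <;> rcases hB with hB | hB
  · obtain ⟨h1, h2, h3, h4, -⟩ := h
    grind
  · exact .inl (isSideCrossing_of_genPosPair h hA hB)
  · exact .inr (isSideCrossing_of_genPosPair h.symm hB hA)
  · obtain ⟨-, -, -, -, h5, h6, h7, h8⟩ := h
    grind

/-- The flag is `true` if the vertical side through the joint `p` belongs to `A`, the owner of
the corner `(e, d)`, and `false` if it belongs to `B`. -/
def IsChargedTo (A B : AxisRect) (e d : Bool) (p : ℝ × ℝ) : Bool → Prop
  | true => IsSideCrossing A B p ∧ p.1 = A.xEnd e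
  | false => IsSideCrossing B A p ∧ p.2 = A.yEnd d

theorem IsChargedTo.eq {e d f : Bool} (hv : A.corner e d ∈ B.toSet)
    (hp : IsChargedTo A B e d p f) (hp' : IsChargedTo A B e d p' f) : p = p' := by
  obtain ⟨hx, hy⟩ := hv
  cases f
  · obtain ⟨⟨hp₁, -, -, hp₂⟩, hp₃⟩ := hp
    obtain ⟨⟨hp'₁, -, -, hp'₂⟩, hp'₃⟩ := hp'
    exact Prod.ext
      (eq_of_mem_Ioo_of_endpoint (exists_xEnd_eq_iff.1 ⟨e, rfl⟩) hx hp₂ hp'₂ hp₁ hp'₁)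
      (hp₃.trans hp'₃.symm)
  · obtain ⟨⟨-, hp₁, hp₂, -⟩, hp₃⟩ := hp
    obtain ⟨⟨-, hp'₁, hp'₂, -⟩, hp'₃⟩ := hp'
    exact Prod.ext (hp₃.trans hp'₃.symm)
      (eq_of_mem_Ioo_of_endpoint (exists_yEnd_eq_iff.1 ⟨d, rfl⟩) hy hp₁ hp'₁ hp₂ hp'₂)

theorem exists_isChargedTo (hAB : ¬ A.Cross B) (hp : IsSideCrossing A B p) :
    ∃ e d, A.corner e d ∈ B.toSet ∧ IsChargedTo A B e d p true ∨
      B.corner e d ∈ A.toSet ∧ IsChargedTo B A e d p false := by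
  have ⟨hxA, hyA, hyB, hxB⟩ := hp
  obtain ⟨e, he⟩ := exists_xEnd_eq_iff.2 hxA
  obtain ⟨d, hd⟩ := exists_yEnd_eq_iff.2 hyB
  by_cases hA : ∃ d', A.yEnd d' ∈ B.Y
  · obtain ⟨d', hd'⟩ := hA
    have hx : A.xEnd e ∈ B.X := he ▸ Set.Ioo_subset_Icc_self hxB
    exact ⟨e, d', .inl ⟨⟨hx, hd'⟩, hp, he.symm⟩⟩
  by_cases hB : ∃ e', B.xEnd e' ∈ A.X
  · obtain ⟨e', he'⟩ := hB
    have hy : B.yEnd d ∈ A.Y := hd ▸ Set.Ioo_subset_Icc_self hyA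
    exact ⟨e', d, .inr ⟨⟨he', hy⟩, hp, hd.symm⟩⟩
  simp only [not_exists] at hA hB
  refine absurd (.inl ⟨?_, ?_⟩) hAB
  · exact Set.Icc_ssubset_Icc_of_mem (he ▸ xEnd_mem_X e) (Set.Ioo_subset_Icc_self hxB)
      (hB false) (hB true)
  · exact Set.Icc_ssubset_Icc_of_mem (hd ▸ yEnd_mem_Y d) (Set.Ioo_subset_Icc_self hyA)
      (hA false) (hA true)

theorem exists_isChargedTo_of_mem_frontier (h : GenPosPair A B) (hAB : ¬ A.Cross B)
    (hA : p ∈ frontier A.toSet) (hB : p ∈ frontier B.toSet) :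
    ∃ f e d, A.corner e d ∈ B.toSet ∧ IsChargedTo A B e d p f ∨
      B.corner e d ∈ A.toSet ∧ IsChargedTo B A e d p f := by
  rcases isSideCrossing_of_mem_frontier h hA hB with hp | hp
  · obtain ⟨e, d, hc | hc⟩ := exists_isChargedTo hAB hp
    exacts [⟨true, e, d, .inl hc⟩, ⟨false, e, d, .inr hc⟩]
  · obtain ⟨e, d, hc | hc⟩ := exists_isChargedTo (mt Cross.symm hAB) hp
    exacts [⟨true, e, d, .inr hc⟩, ⟨false, e, d, .inl hc⟩]

open scoped Classical in
theorem card_cornerIncidences_le {ι : Type*} [Fintype ι] (R : ι → AxisRect) {q : ℕ}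
    (hclique : ∀ S : Finset ι,
      (∀ i ∈ S, ∀ j ∈ S, ((R i).toSet ∩ (R j).toSet).Nonempty) → #S ≤ q) :
    #{x : (ι × Bool × Bool) × ι |
        x.2 ≠ x.1.1 ∧ (R x.1.1).corner x.1.2.1 x.1.2.2 ∈ (R x.2).toSet}
      ≤ 4 * Fintype.card ι * (q - 1) := by
  refine (card_filter_prod_le_mul _ fun ⟨s, e, d⟩ => card_filter_ne_mem_le_of_clique
    (fun i => (R i).toSet) hclique (corner_mem_toSet e d)).trans ?_
  simp only [Fintype.card_prod, Fintype.card_bool]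
  exact le_of_eq (by ring)

end AxisRect

open AxisRect

theorem joint_count_general (q n : ℕ) (R : Fin n → AxisRect)
    (hgp : ∀ i j : Fin n, i ≠ j → GenPosPair (R i) (R j))
    (hnc : ∀ i j : Fin n, ¬ AxisRect.Cross (R i) (R j))
    (hclique : ∀ S : Finset (Fin n),
      (∀ i ∈ S, ∀ j ∈ S, ((R i).toSet ∩ (R j).toSet).Nonempty) → S.card ≤ q) :
    ({p : ℝ × ℝ | ∃ i j : Fin n, i ≠ j ∧
        p ∈ frontier (R i).toSet ∧ p ∈ frontier (R j).toSet}).ncard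
      ≤ 8 * (q - 1) * n := by
  classical
  set I : Finset ((Fin n × Bool × Bool) × Fin n) :=
    {x | x.2 ≠ x.1.1 ∧ (R x.1.1).corner x.1.2.1 x.1.2.2 ∈ (R x.2).toSet}
  calc _ ≤ #(univ ×ˢ I : Finset (Bool × _)) := by
        refine Set.ncard_le_card_of_forall_subsingleton
          (fun p ⟨f, (s, e, d), t⟩ => IsChargedTo (R s) (R t) e d p f) ?_ ?_
        · rintro p ⟨i, j, hij, hi, hj⟩
          obtain ⟨f, e, d, ⟨hc, hp⟩ | ⟨hc, hp⟩⟩ :=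
            exists_isChargedTo_of_mem_frontier (hgp i j hij) (hnc i j) hi hj
          · exact ⟨(f, (i, e, d), j), by simp [I, hij.symm, hc], hp⟩
          · exact ⟨(f, (j, e, d), i), by simp [I, hij, hc], hp⟩
        · rintro ⟨f, ⟨s, e, d⟩, t⟩ hx p hp p' hp'
          exact IsChargedTo.eq (mem_filter.1 (mem_product.1 hx).2).2.2 hp.2 hp'.2
    _ = 2 * #I := by simp
    _ ≤ 2 * (4 * n * (q - 1)) := by
        gcongr
        simpa using card_cornerIncidences_le R hclique
    _ = 8 * (q - 1) * n := by ring

/-- **Arrangement graph size.** If no two rectangles of a family of `n` rectangles in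
general position cross and no `q + 1` of them pairwise intersect, then the number of
joints (points lying on the boundaries of at least two distinct rectangles) is at most
`8 (q - 1) n`. -/
theorem joint_count (q n : ℕ) (hq : 1 ≤ q) (R : Fin n → AxisRect)
    (hgp : ∀ i j : Fin n, i ≠ j → GenPosPair (R i) (R j))
    (hnc : ∀ i j : Fin n, ¬ AxisRect.Cross (R i) (R j))
    (hclique : ∀ S : Finset (Fin n),
      (∀ i ∈ S, ∀ j ∈ S, ((R i).toSet ∩ (R j).toSet).Nonempty) → S.card ≤ q) :
    ({p : ℝ × ℝ | ∃ i j : Fin n, i ≠ j ∧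
        p ∈ frontier (R i).toSet ∧ p ∈ frontier (R j).toSet}).ncard
      ≤ 8 * (q - 1) * n :=
  joint_count_general q n R hgp hnc hclique
end
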